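/- For any x_i ∈ K_i (1 ≤ i ≤ N), the limit F_{x_1...x_N}(σ) := lim_{m→−∞} w_{σ_0}∘⋯∘w_{σ_m}(x_{i(σ_m)}) exists for P_{x_1...x_N}-almost every σ ∈ Σ; moreover, for P_{x_1...x_N}-a.e. σ, the sequence (Y^{x_1...x_N}_{m0}(σ))_{m≤0} is Cauchy with Σ_{m=0}^{-∞} d(Y_{m0}(σ), Y_{(m-1)0}(σ)) < ∞. -/

import Mathlib

open MeasureTheory ENNReal Filter

/-- A contractive Markov system on a metric space `K` with vertex type `V` and edge type `E`. -/
structure CMS (E V K : Type*) [Fintype E] [MetricSpace K] [MeasurableSpace K] where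
  i : E → V
  t : E → V
  Ks : V → Set K
  w : E → K → K
  p : E → K → ℝ
  a : ℝ
  ha0 : 0 < a
  ha1 : a < 1
  Ks_nonempty : ∀ v, (Ks v).Nonempty
  Ks_meas : ∀ v, MeasurableSet (Ks v)
  Ks_disj : ∀ v v', v ≠ v' → Disjoint (Ks v) (Ks v')
  Ks_cover : ∀ x : K, ∃ v, x ∈ Ks v
  w_meas : ∀ e, Measurable (w e)
  p_meas : ∀ e, Measurable (p e)
  p_nonneg : ∀ e x, 0 ≤ p e x
  p_sum : ∀ x : K, ∑ e, p e x = 1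
  p_zero : ∀ e, ∀ x ∉ Ks (i e), p e x = 0
  w_maps : ∀ e, Set.MapsTo (w e) (Ks (i e)) (Ks (t e))
  contractive : ∀ v, ∀ x ∈ Ks v, ∀ y ∈ Ks v,
      ∑ e, p e x * dist (w e x) (w e y) ≤ a * dist x y

variable {E V K : Type*} [Fintype E] [MetricSpace K] [MeasurableSpace K]

/-- `S.orbit e m x j = w_{e_{m+j}} ∘ ⋯ ∘ w_{e_m} (x)`. -/
def CMS.orbit (S : CMS E V K) (e : ℤ → E) (m : ℤ) (x : K) : ℕ → K
  | 0 => S.w (e m) x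
  | j + 1 => S.w (e (m + j + 1)) (S.orbit e m x j)

/-- `S.pathProb e m x j = p_{e_m}(x) p_{e_{m+1}}(w_{e_m}x) ⋯ p_{e_{m+j}}(w_{e_{m+j-1}}∘⋯∘w_{e_m}x)`. -/
def CMS.pathProb (S : CMS E V K) (e : ℤ → E) (m : ℤ) (x : K) : ℕ → ℝ
  | 0 => S.p (e m) x
  | j + 1 => S.pathProb e m x j * S.p (e (m + j + 1)) (S.orbit e m x j)

/-- The σ-algebra `𝒜_m` on `Σ = E^ℤ` generated by the coordinates with index `≥ m`. -/
def Am (E : Type*) (m : ℤ) : MeasurableSpace (ℤ → E) :=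
  ⨆ (i : ℤ) (_ : m ≤ i), MeasurableSpace.comap (fun σ => σ i) ⊤

/-- The cylinder `_m[e_m, …, e_{m+j}]`. -/
def cyl (m : ℤ) (j : ℕ) (e : ℤ → E) : Set (ℤ → E) :=
  {σ | ∀ k : ℤ, m ≤ k → k ≤ m + j → σ k = e k}

/-- `P` is the family of Markov measures `P^m_x` on `(Σ, 𝒜_m)` of the CMS `S`. -/
def IsKernel (S : CMS E V K) (P : ∀ m : ℤ, K → @Measure (ℤ → E) (Am E m)) : Prop :=
  (∀ (m : ℤ) (x : K), @IsProbabilityMeasure _ (Am E m) (P m x)) ∧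
  ∀ (m : ℤ) (x : K) (e : ℤ → E) (j : ℕ),
    P m x (cyl m j e) = ENNReal.ofReal (S.pathProb e m x j)

/-- The `m`-th lift `Φ_m(ν)(A) = ∫ P^m_x(A) dν(x)`. -/
noncomputable def liftMeas (P : ∀ m : ℤ, K → @Measure (ℤ → E) (Am E m))
    (m : ℤ) (ν : Measure K) (A : Set (ℤ → E)) : ℝ≥0∞ :=
  ∫⁻ x, P m x A ∂ν

/-- The lift outer measure `Φ(ν)`, via coverings `B ⊆ ⋃_{m ≤ 0} A_m`, `A_m ∈ 𝒜_m` (indexed by `m = -n`). -/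
noncomputable def PhiM (P : ∀ m : ℤ, K → @Measure (ℤ → E) (Am E m))
    (ν : Measure K) (B : Set (ℤ → E)) : ℝ≥0∞ :=
  ⨅ (A : ℕ → Set (ℤ → E)) (_ : ∀ n : ℕ, MeasurableSet[Am E (-(n : ℤ))] (A n))
    (_ : B ⊆ ⋃ n, A n), ∑' n : ℕ, liftMeas P (-(n : ℤ)) ν (A n)

/-- `Y^{x_1…x_N}_{m0}(σ) = w_{σ_0}∘⋯∘w_{σ_m}(x_{i(σ_m)})`. -/
noncomputable def CMS.Y (S : CMS E V K) (xs : V → K) (m : ℤ) (σ : ℤ → E) : K :=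
  S.orbit σ m (xs (S.i (σ m))) (-m).toNat

/-- The uniform measure `(1/N) ∑_i δ_{x_i}`. -/
noncomputable def unif [Fintype V] (xs : V → K) : Measure K :=
  ((Fintype.card V : ℝ≥0∞))⁻¹ • ∑ v : V, Measure.dirac (xs v)

/-- The measure `P^m_{x_1…x_N} = Φ_m((1/N)∑δ_{x_i}) = (1/N)∑_i P^m_{x_i}`. -/
noncomputable def PmMix [Fintype V] (P : ∀ m : ℤ, K → @Measure (ℤ → E) (Am E m))
    (xs : V → K) (m : ℤ) : @Measure (ℤ → E) (Am E m) :=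
  ((Fintype.card V : ℝ≥0∞))⁻¹ • ∑ v : V, P m (xs v)

/-!
Write `d_n(σ) = d(Y_{-n,0}(σ), Y_{-n-1,0}(σ))`. It depends only on the letters
`σ_{-n-1}, …, σ_0`, and peeling off the first letter and applying the contraction condition
`n + 1` times bounds its `P^{-n-1}_{x_v}`-expectation by `a^{n+1} D`, where
`D = ∑_e d(x_{t(e)}, w_e(x_{i(e)}))`. Fix `a < b < 1`. By Markov's inequality the
`𝒜_{-n-1}`-measurable set `{d_n > c b^n}` has `P_{x_1…x_N}`-measure at most `(a D / c) (a/b)^n`.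
Off the union of these sets the increments are dominated by a geometric series, so the set of
bad `σ` has lift outer measure at most `a D / (c (1 - a/b))` for every `c > 0`.
-/

theorem Finset.sum_filter_lt_le_sum_mul_div {ι : Type*} [Fintype ι] (q f : ι → ℝ)
    (hq : ∀ u, 0 ≤ q u) (hf : ∀ u, 0 ≤ f u) {t : ℝ} (ht : 0 < t) [DecidablePred (t < f ·)] :
    ∑ u ∈ Finset.univ.filter (t < f ·), q u ≤ (∑ u, q u * f u) / t := by
  calc ∑ u ∈ Finset.univ.filter (t < f ·), q u
      ≤ ∑ u ∈ Finset.univ.filter (t < f ·), q u * f u / t := by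
        refine Finset.sum_le_sum fun u hu => ?_
        rw [mul_div_assoc]
        exact le_mul_of_one_le_right (hq u) ((one_le_div ht).2 (Finset.mem_filter.1 hu).2.le)
    _ ≤ ∑ u, q u * f u / t :=
        Finset.sum_le_sum_of_subset_of_nonneg (Finset.filter_subset _ _)
          fun u _ _ => div_nonneg (mul_nonneg (hq u) (hf u)) ht.le
    _ = (∑ u, q u * f u) / t := (Finset.sum_div _ _ _).symm

theorem Fintype.sum_fin_succ_pi {α M : Type*} [Fintype α] [AddCommMonoid M] {j : ℕ}
    (f : (Fin (j + 1) → α) → M) : ∑ u, f u = ∑ a, ∑ u : Fin j → α, f (Fin.cons a u) := by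
  rw [← (Fin.consEquiv fun _ => α).sum_comp, Fintype.sum_prod_type]
  rfl

namespace CMS

variable (S : CMS E V K)

-- `wordOrbit u = w_{u_{j-1}} ∘ ⋯ ∘ w_{u_0}` recurses on the first letter, as the contraction
-- estimate needs, whereas `CMS.orbit` recurses on the last one.
def wordOrbit : {j : ℕ} → (Fin j → E) → K → K
  | 0, _, x => x
  | _ + 1, u, x => wordOrbit (Fin.tail u) (S.w (u 0) x)

def wordProb : {j : ℕ} → (Fin j → E) → K → ℝ
  | 0, _, _ => 1
  | _ + 1, u, x => S.p (u 0) x * wordProb (Fin.tail u) (S.w (u 0) x)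

@[simp]
theorem wordOrbit_cons {j : ℕ} (e : E) (u : Fin j → E) (x : K) :
    S.wordOrbit (Fin.cons e u) x = S.wordOrbit u (S.w e x) := by
  simp [wordOrbit]

@[simp]
theorem wordProb_cons {j : ℕ} (e : E) (u : Fin j → E) (x : K) :
    S.wordProb (Fin.cons e u) x = S.p e x * S.wordProb u (S.w e x) := by
  simp [wordProb]

theorem wordProb_nonneg : ∀ {j : ℕ} (u : Fin j → E) (x : K), 0 ≤ S.wordProb u x
  | 0, _, _ => zero_le_one
  | _ + 1, _, _ => mul_nonneg (S.p_nonneg _ _) (wordProb_nonneg _ _)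

theorem mem_Ks_of_p_ne_zero {e : E} {x : K} (h : S.p e x ≠ 0) : x ∈ S.Ks (S.i e) :=
  not_not.mp fun hx => h (S.p_zero e x hx)

theorem mem_Ks_of_wordProb_ne_zero {j : ℕ} {u : Fin (j + 1) → E} {x : K}
    (h : S.wordProb u x ≠ 0) : x ∈ S.Ks (S.i (u 0)) :=
  S.mem_Ks_of_p_ne_zero (left_ne_zero_of_mul h)

theorem eq_of_mem_Ks {x : K} {v v' : V} (h : x ∈ S.Ks v) (h' : x ∈ S.Ks v') : v = v' :=
  by_contra fun hne => Set.disjoint_left.mp (S.Ks_disj v v' hne) h h'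

theorem sum_wordProb_mul_dist_le (j : ℕ) {v : V} {x y : K} (hx : x ∈ S.Ks v)
    (hy : y ∈ S.Ks v) :
    ∑ u : Fin j → E, S.wordProb u x * dist (S.wordOrbit u x) (S.wordOrbit u y)
      ≤ S.a ^ j * dist x y := by
  induction j generalizing v x y with
  | zero => simp [wordOrbit, wordProb]
  | succ j ih =>
    rw [Fintype.sum_fin_succ_pi]
    simp only [wordOrbit_cons, wordProb_cons, mul_assoc, ← Finset.mul_sum]
    calc ∑ e, S.p e x * ∑ u : Fin j → E,
          S.wordProb u (S.w e x) * dist (S.wordOrbit u (S.w e x)) (S.wordOrbit u (S.w e y))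
        ≤ ∑ e, S.p e x * (S.a ^ j * dist (S.w e x) (S.w e y)) := by
          refine Finset.sum_le_sum fun e _ => ?_
          by_cases hp : S.p e x = 0
          · simp [hp]
          have hv := S.eq_of_mem_Ks hx (S.mem_Ks_of_p_ne_zero hp)
          exact mul_le_mul_of_nonneg_left
            (ih (S.w_maps e (hv ▸ hx)) (S.w_maps e (hv ▸ hy))) (S.p_nonneg e x)
      _ = S.a ^ j * ∑ e, S.p e x * dist (S.w e x) (S.w e y) := by
          rw [Finset.mul_sum]
          exact Finset.sum_congr rfl fun e _ => by ring
      _ ≤ S.a ^ j * (S.a * dist x y) :=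
          mul_le_mul_of_nonneg_left (S.contractive v x hx y hy) (pow_nonneg S.ha0.le j)
      _ = S.a ^ (j + 1) * dist x y := by ring

def anchoredOrbit (xs : V → K) {j : ℕ} (u : Fin (j + 1) → E) : K :=
  S.wordOrbit u (xs (S.i (u 0)))

def anchorGap (xs : V → K) : ℝ :=
  ∑ e, dist (xs (S.t e)) (S.w e (xs (S.i e)))

theorem sum_wordProb_mul_dist_anchoredOrbit_le {xs : V → K} (hxs : ∀ v, xs v ∈ S.Ks v)
    (j : ℕ) {v : V} {y : K} (hy : y ∈ S.Ks v) :
    ∑ u : Fin (j + 1) → E, S.wordProb u y * dist (S.anchoredOrbit xs u) (S.wordOrbit u y)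
      ≤ S.a ^ (j + 1) * dist (xs v) y := by
  refine le_trans (Finset.sum_le_sum fun u _ => ?_)
    ((S.sum_wordProb_mul_dist_le (j + 1) hy (hxs v)).trans_eq (by rw [dist_comm]))
  by_cases hp : S.wordProb u y = 0
  · simp [hp]
  rw [anchoredOrbit, S.eq_of_mem_Ks (S.mem_Ks_of_wordProb_ne_zero hp) hy, dist_comm]

theorem sum_wordProb_mul_dist_anchoredOrbit_tail_le {xs : V → K}
    (hxs : ∀ v, xs v ∈ S.Ks v) (n : ℕ) (v : V) :
    ∑ u : Fin (n + 2) → E, S.wordProb u (xs v) *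
        dist (S.anchoredOrbit xs (Fin.tail u)) (S.anchoredOrbit xs u)
      ≤ S.a ^ (n + 1) * S.anchorGap xs := by
  rw [Fintype.sum_fin_succ_pi]
  calc ∑ e, ∑ u : Fin (n + 1) → E, S.wordProb (Fin.cons e u) (xs v) *
        dist (S.anchoredOrbit xs (Fin.tail (Fin.cons e u : Fin (n + 2) → E)))
          (S.anchoredOrbit xs (Fin.cons e u : Fin (n + 2) → E))
      ≤ ∑ e, S.p e (xs v) * (S.a ^ (n + 1) * S.anchorGap xs) := by
        refine Finset.sum_le_sum fun e _ => ?_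
        by_cases hp : S.p e (xs v) = 0
        · simp [hp]
        obtain rfl := S.eq_of_mem_Ks (S.mem_Ks_of_p_ne_zero hp) (hxs v)
        simp only [Fin.tail_cons, wordProb_cons, anchoredOrbit, wordOrbit_cons, Fin.cons_zero,
          mul_assoc, ← Finset.mul_sum]
        refine mul_le_mul_of_nonneg_left ?_ (S.p_nonneg e _)
        calc _ ≤ S.a ^ (n + 1) * dist (xs (S.t e)) (S.w e (xs (S.i e))) :=
              S.sum_wordProb_mul_dist_anchoredOrbit_le hxs n (S.w_maps e (hxs _))
          _ ≤ S.a ^ (n + 1) * S.anchorGap xs :=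
              mul_le_mul_of_nonneg_left
                (Finset.single_le_sum (f := fun e => dist (xs (S.t e)) (S.w e (xs (S.i e))))
                  (fun e _ => dist_nonneg) (Finset.mem_univ e))
                (pow_nonneg S.ha0.le _)
    _ = S.a ^ (n + 1) * S.anchorGap xs := by rw [← Finset.sum_mul, S.p_sum, one_mul]

end CMS

def wordAt {E : Type*} (m : ℤ) (j : ℕ) (σ : ℤ → E) : Fin j → E :=
  fun i => σ (m + i)

@[simp]
theorem wordAt_zero {E : Type*} (m : ℤ) (j : ℕ) (σ : ℤ → E) : wordAt m (j + 1) σ 0 = σ m := by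
  simp [wordAt]

theorem tail_wordAt {E : Type*} (m : ℤ) (j : ℕ) (σ : ℤ → E) :
    Fin.tail (wordAt m (j + 1) σ) = wordAt (m + 1) j σ := by
  funext i
  simp only [Fin.tail, wordAt, Fin.val_succ, Nat.cast_add, Nat.cast_one]
  ring_nf

theorem cyl_eq_preimage_wordAt {E : Type*} (m : ℤ) (j : ℕ) (e : ℤ → E) :
    cyl m j e = wordAt m (j + 1) ⁻¹' {wordAt m (j + 1) e} := by
  ext σ
  refine ⟨fun h => funext fun i => h _ (by omega) (by omega), fun h k hmk hkm => ?_⟩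
  have hk := congrFun h ⟨(k - m).toNat, by omega⟩
  simp only [wordAt] at hk
  rwa [Int.toNat_of_nonneg (by omega), add_sub_cancel] at hk

theorem measurableSet_coord_eq {E : Type*} {m k : ℤ} (hk : m ≤ k) (c : E) :
    MeasurableSet[Am E m] {σ : ℤ → E | σ k = c} :=
  le_iSup₂ (f := fun (i : ℤ) (_ : m ≤ i) => MeasurableSpace.comap (fun σ : ℤ → E => σ i) ⊤)
    k hk _ ⟨{c}, trivial, rfl⟩

theorem measurableSet_preimage_wordAt {E : Type*} [Countable E] (m : ℤ) (j : ℕ)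
    (B : Set (Fin j → E)) :
    MeasurableSet[Am E m] (wordAt m j ⁻¹' B) := by
  have hB : wordAt m j ⁻¹' B = ⋃ u ∈ B, ⋂ i : Fin j, {σ : ℤ → E | σ (m + i) = u i} := by
    ext σ
    simp only [Set.mem_preimage, Set.mem_iUnion, Set.mem_iInter, Set.mem_ofPred_eq, exists_prop]
    exact ⟨fun h => ⟨_, h, fun _ => rfl⟩, fun ⟨u, hu, hσ⟩ => (funext hσ : wordAt m j σ = u) ▸ hu⟩
  rw [hB]
  exact MeasurableSet.biUnion B.to_countable fun u _ =>
    MeasurableSet.iInter fun i => measurableSet_coord_eq (by omega) (u i)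

namespace CMS

variable (S : CMS E V K)

theorem orbit_succ (e : ℤ → E) (j : ℕ) (m : ℤ) (x : K) :
    S.orbit e m x (j + 1) = S.orbit e (m + 1) (S.w (e m) x) j := by
  induction j generalizing m x with
  | zero => simp [CMS.orbit]
  | succ j ih =>
    rw [CMS.orbit, ih, CMS.orbit]
    congr 3
    push_cast
    ring

theorem pathProb_succ (e : ℤ → E) (j : ℕ) (m : ℤ) (x : K) :
    S.pathProb e m x (j + 1) = S.p (e m) x * S.pathProb e (m + 1) (S.w (e m) x) j := by
  induction j generalizing m x with
  | zero => simp [CMS.pathProb, CMS.orbit]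
  | succ j ih =>
    rw [CMS.pathProb, ih, CMS.pathProb, orbit_succ, mul_assoc]
    congr 4
    push_cast
    ring

theorem orbit_eq_wordOrbit (e : ℤ → E) (j : ℕ) (m : ℤ) (x : K) :
    S.orbit e m x j = S.wordOrbit (wordAt m (j + 1) e) x := by
  induction j generalizing m x with
  | zero => simp [CMS.orbit, wordOrbit]
  | succ j ih =>
    rw [orbit_succ, ih]
    conv_rhs => rw [wordOrbit, tail_wordAt, wordAt_zero]

theorem pathProb_eq_wordProb (e : ℤ → E) (j : ℕ) (m : ℤ) (x : K) :
    S.pathProb e m x j = S.wordProb (wordAt m (j + 1) e) x := by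
  induction j generalizing m x with
  | zero => simp [CMS.pathProb, wordProb]
  | succ j ih =>
    rw [pathProb_succ, ih]
    conv_rhs => rw [wordProb, tail_wordAt, wordAt_zero]

theorem Y_neg_natCast (xs : V → K) (k : ℕ) (σ : ℤ → E) :
    S.Y xs (-k) σ = S.anchoredOrbit xs (wordAt (-k) (k + 1) σ) := by
  rw [CMS.Y, neg_neg, Int.toNat_natCast, orbit_eq_wordOrbit, anchoredOrbit, wordAt_zero]

theorem dist_Y_neg_eq (xs : V → K) (n : ℕ) (σ : ℤ → E) :
    dist (S.Y xs (-n) σ) (S.Y xs (-n - 1) σ) =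
      dist (S.anchoredOrbit xs (Fin.tail (wordAt (-n - 1) (n + 2) σ)))
        (S.anchoredOrbit xs (wordAt (-n - 1) (n + 2) σ)) := by
  have hm : -(n : ℤ) - 1 = -((n + 1 : ℕ) : ℤ) := by push_cast; ring
  have hm' : -((n + 1 : ℕ) : ℤ) + 1 = -n := by push_cast; ring
  rw [hm, Y_neg_natCast, Y_neg_natCast, tail_wordAt, hm']

theorem setOf_lt_dist_Y_eq_preimage (xs : V → K) (n : ℕ) (t : ℝ) :
    {σ : ℤ → E | t < dist (S.Y xs (-n) σ) (S.Y xs (-n - 1) σ)} =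
      wordAt (-n - 1) (n + 2) ⁻¹'
        {u | t < dist (S.anchoredOrbit xs (Fin.tail u)) (S.anchoredOrbit xs u)} := by
  ext σ
  exact iff_of_eq (congrArg (t < ·) (S.dist_Y_neg_eq xs n σ))

theorem measurableSet_lt_dist_Y (xs : V → K) (n : ℕ) (t : ℝ) :
    MeasurableSet[Am E (-n - 1)] {σ | t < dist (S.Y xs (-n) σ) (S.Y xs (-n - 1) σ)} := by
  rw [setOf_lt_dist_Y_eq_preimage]
  exact measurableSet_preimage_wordAt _ _ _

theorem tendsto_Y_of_dist_le_geometric [CompleteSpace K] (xs : V → K) (σ : ℤ → E) {c b : ℝ}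
    (hb0 : 0 ≤ b) (hb1 : b < 1)
    (h : ∀ n : ℕ, dist (S.Y xs (-n) σ) (S.Y xs (-n - 1) σ) ≤ c * b ^ n) :
    (∃ L : K, Tendsto (fun n : ℕ => S.Y xs (-(n : ℤ)) σ) atTop (nhds L)) ∧
      CauchySeq (fun n : ℕ => S.Y xs (-(n : ℤ)) σ) ∧
      Summable (fun n : ℕ => dist (S.Y xs (-(n : ℤ)) σ) (S.Y xs (-(n : ℤ) - 1) σ)) := by
  have hsum : Summable fun n : ℕ => dist (S.Y xs (-n) σ) (S.Y xs (-n - 1) σ) :=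
    .of_nonneg_of_le (fun _ => dist_nonneg) h ((summable_geometric_of_lt_one hb0 hb1).mul_left c)
  have hcauchy : CauchySeq fun n : ℕ => S.Y xs (-(n : ℤ)) σ :=
    cauchySeq_of_summable_dist (hsum.congr fun n => by rw [Nat.cast_succ, neg_add'])
  exact ⟨cauchySeq_tendsto_of_complete hcauchy, hcauchy, hsum⟩

end CMS

theorem IsKernel.measure_preimage_wordAt_le {S : CMS E V K}
    {P : ∀ m : ℤ, K → @Measure (ℤ → E) (Am E m)} (hP : IsKernel S P) (m : ℤ) (j : ℕ) (x : K)
    (B : Finset (Fin (j + 1) → E)) :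
    P m x (wordAt m (j + 1) ⁻¹' ↑B) ≤ ENNReal.ofReal (∑ u ∈ B, S.wordProb u x) := by
  have hsingle : ∀ u, P m x (wordAt m (j + 1) ⁻¹' {u}) = ENNReal.ofReal (S.wordProb u x) := by
    intro u
    have hinj : Function.Injective fun i : Fin (j + 1) => m + (i : ℕ) :=
      (add_right_injective m).comp (Nat.cast_injective.comp Fin.val_injective)
    have hu : wordAt m (j + 1) (Function.extend _ u fun _ => u 0) = u :=
      funext (hinj.extend_apply u _)
    rw [← hu, ← cyl_eq_preimage_wordAt, hP.2, S.pathProb_eq_wordProb]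
  calc P m x (wordAt m (j + 1) ⁻¹' ↑B) = P m x (⋃ u ∈ B, wordAt m (j + 1) ⁻¹' {u}) := by
        rw [← Set.preimage_iUnion₂, ← Finset.set_biUnion_coe, Set.biUnion_of_singleton]
    _ ≤ ∑ u ∈ B, P m x (wordAt m (j + 1) ⁻¹' {u}) := measure_biUnion_finset_le _ _
    _ = ENNReal.ofReal (∑ u ∈ B, S.wordProb u x) := by
        rw [ENNReal.ofReal_sum_of_nonneg fun u _ => S.wordProb_nonneg u x]
        exact Finset.sum_congr rfl fun u _ => hsingle u

theorem IsKernel.measure_lt_dist_Y_le {S : CMS E V K}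
    {P : ∀ m : ℤ, K → @Measure (ℤ → E) (Am E m)} (hP : IsKernel S P) {xs : V → K}
    (hxs : ∀ v, xs v ∈ S.Ks v) (n : ℕ) {t : ℝ} (ht : 0 < t) (v : V) :
    P (-n - 1) (xs v) {σ | t < dist (S.Y xs (-n) σ) (S.Y xs (-n - 1) σ)}
      ≤ ENNReal.ofReal (S.a ^ (n + 1) * S.anchorGap xs / t) := by
  classical
  set f : (Fin (n + 2) → E) → ℝ :=
    fun u => dist (S.anchoredOrbit xs (Fin.tail u)) (S.anchoredOrbit xs u)
  have hB : {u | t < f u} = ↑(Finset.univ.filter (t < f ·)) := by ext; simp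
  rw [S.setOf_lt_dist_Y_eq_preimage, hB]
  refine (hP.measure_preimage_wordAt_le _ _ _ _).trans (ENNReal.ofReal_le_ofReal ?_)
  calc _ ≤ (∑ u, S.wordProb u (xs v) * f u) / t :=
        Finset.sum_filter_lt_le_sum_mul_div _ _ (S.wordProb_nonneg · _) (fun _ => dist_nonneg) ht
    _ ≤ S.a ^ (n + 1) * S.anchorGap xs / t :=
        div_le_div_of_nonneg_right (S.sum_wordProb_mul_dist_anchoredOrbit_tail_le hxs n v) ht.le

theorem liftMeas_unif_le {E V K : Type*} [Fintype V] [MeasurableSpace K]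
    [MeasurableSingletonClass K]
    (P : ∀ m : ℤ, K → @Measure (ℤ → E) (Am E m)) (xs : V → K) {m : ℤ} {A : Set (ℤ → E)}
    {c : ℝ≥0∞} (h : ∀ v, P m (xs v) A ≤ c) : liftMeas P m (unif xs) A ≤ c := by
  rw [liftMeas, unif, lintegral_smul_measure, lintegral_finsetSum_measure]
  simp only [lintegral_dirac, smul_eq_mul]
  calc (Fintype.card V : ℝ≥0∞)⁻¹ * ∑ v, P m (xs v) A
      ≤ (Fintype.card V : ℝ≥0∞)⁻¹ * (Fintype.card V * c) := by
        gcongr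
        exact (Finset.sum_le_card_nsmul _ _ c fun v _ => h v).trans_eq
          (by rw [Finset.card_univ, nsmul_eq_mul])
    _ ≤ c := by
        rcases eq_or_ne (Fintype.card V) 0 with hV | hV
        · simp [hV]
        · rw [← mul_assoc, ENNReal.inv_mul_cancel (by exact_mod_cast hV) (by simp), one_mul]

theorem PhiM_le_tsum_of_subset_iUnion {E K : Type*} [MeasurableSpace K]
    (P : ∀ m : ℤ, K → @Measure (ℤ → E) (Am E m))
    (ν : Measure K) {B : Set (ℤ → E)} {A : ℕ → Set (ℤ → E)}
    (hA : ∀ n : ℕ, MeasurableSet[Am E (-n - 1)] (A n)) (hB : B ⊆ ⋃ n, A n) :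
    PhiM P ν B ≤ ∑' n : ℕ, liftMeas P (-n - 1) ν (A n) := by
  let A' : ℕ → Set (ℤ → E) := fun | 0 => ∅ | n + 1 => A n
  have hA' : ∀ k : ℕ, MeasurableSet[Am E (-k)] (A' k)
    | 0 => @MeasurableSet.empty _ (Am E _)
    | n + 1 => by
      show MeasurableSet[Am E (-((n + 1 : ℕ) : ℤ))] (A n)
      rw [Nat.cast_succ, neg_add']
      exact hA n
  have hB' : B ⊆ ⋃ k, A' k := hB.trans (Set.iUnion_subset fun n => Set.subset_iUnion A' (n + 1))
  calc PhiM P ν B ≤ ∑' k : ℕ, liftMeas P (-k) ν (A' k) :=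
        iInf_le_of_le A' (iInf_le_of_le hA' (iInf_le _ hB'))
    _ = ∑' n : ℕ, liftMeas P (-n - 1) ν (A n) := by
        have h0 : liftMeas P (-((0 : ℕ) : ℤ)) ν (A' 0) = 0 := by simp [liftMeas, A']
        rw [tsum_eq_zero_add' ENNReal.summable, h0, zero_add]
        refine tsum_congr fun n => ?_
        rw [show -((n + 1 : ℕ) : ℤ) = -n - 1 by push_cast; ring]

theorem PhiM_unif_not_convergent_le [CompleteSpace K] [MeasurableSingletonClass K] [Fintype V]
    {S : CMS E V K} {P : ∀ m : ℤ, K → @Measure (ℤ → E) (Am E m)} (hP : IsKernel S P)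
    {xs : V → K} (hxs : ∀ v, xs v ∈ S.Ks v) {b c : ℝ} (hab : S.a < b) (hb1 : b < 1)
    (hc : 0 < c) :
    PhiM P (unif xs) {σ : ℤ → E |
      ¬ ((∃ L : K, Tendsto (fun n : ℕ => S.Y xs (-(n : ℤ)) σ) atTop (nhds L)) ∧
        CauchySeq (fun n : ℕ => S.Y xs (-(n : ℤ)) σ) ∧
        Summable (fun n : ℕ => dist (S.Y xs (-(n : ℤ)) σ) (S.Y xs (-(n : ℤ) - 1) σ)))}
      ≤ ENNReal.ofReal (S.a * S.anchorGap xs * (1 - S.a / b)⁻¹ / c) := by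
  have hb0 : 0 < b := S.ha0.trans hab
  have hr0 : 0 ≤ S.a / b := div_nonneg S.ha0.le hb0.le
  have hr1 : S.a / b < 1 := (div_lt_one hb0).2 hab
  have hD : 0 ≤ S.anchorGap xs := Finset.sum_nonneg fun _ _ => dist_nonneg
  calc _ ≤ ∑' n : ℕ, liftMeas P (-n - 1) (unif xs)
          {σ | c * b ^ n < dist (S.Y xs (-n) σ) (S.Y xs (-n - 1) σ)} := by
        refine PhiM_le_tsum_of_subset_iUnion P _ (fun n => S.measurableSet_lt_dist_Y xs n _) ?_
        intro σ hσ
        by_contra hcover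
        simp only [Set.mem_iUnion, Set.mem_ofPred_eq, not_exists, not_lt] at hcover
        exact hσ (S.tendsto_Y_of_dist_le_geometric xs σ hb0.le hb1 hcover)
    _ ≤ ∑' n : ℕ, ENNReal.ofReal (S.a * S.anchorGap xs / c * (S.a / b) ^ n) := by
        refine ENNReal.tsum_le_tsum fun n => liftMeas_unif_le P xs fun v => ?_
        refine (hP.measure_lt_dist_Y_le hxs n (by positivity) v).trans_eq (congrArg _ ?_)
        rw [div_pow]
        field_simp
        ring
    _ = ENNReal.ofReal (S.a * S.anchorGap xs * (1 - S.a / b)⁻¹ / c) := by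
        rw [← ENNReal.ofReal_tsum_of_nonneg, tsum_mul_left, tsum_geometric_of_lt_one hr0 hr1]
        · ring_nf
        · exact fun n => mul_nonneg (div_nonneg (mul_nonneg S.ha0.le hD) hc.le) (pow_nonneg hr0 n)
        · exact (summable_geometric_of_lt_one hr0 hr1).mul_left _

/-- for `P_{x_1…x_N}`-a.e. `σ` the limit `F_{x_1…x_N}(σ) = lim_{m→-∞} Y_{m0}(σ)`
exists; moreover a.e. the sequence is Cauchy and `∑_{m≤0} d(Y_{m0}, Y_{(m-1)0}) < ∞`. -/
theorem statement5 {E V K : Type*} [Fintype E] [Fintype V] [MetricSpace K] [CompleteSpace K]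
    [MeasurableSpace K] [BorelSpace K] (S : CMS E V K)
    (P : ∀ m : ℤ, K → @Measure (ℤ → E) (Am E m)) (hP : IsKernel S P)
    (xs : V → K) (hxs : ∀ v, xs v ∈ S.Ks v) :
    PhiM P (unif xs) {σ : ℤ → E |
      ¬ ((∃ L : K, Tendsto (fun n : ℕ => S.Y xs (-(n : ℤ)) σ) atTop (nhds L)) ∧
        CauchySeq (fun n : ℕ => S.Y xs (-(n : ℤ)) σ) ∧
        Summable (fun n : ℕ => dist (S.Y xs (-(n : ℤ)) σ) (S.Y xs (-(n : ℤ) - 1) σ)))} = 0 := by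
  obtain ⟨b, hab, hb1⟩ := exists_between S.ha1
  have hbound : Tendsto (fun N : ℕ => ENNReal.ofReal (S.a * S.anchorGap xs * (1 - S.a / b)⁻¹ / N))
      atTop (nhds 0) := by
    simpa using ENNReal.tendsto_ofReal (tendsto_const_div_atTop_nhds_zero_nat _)
  refine le_antisymm (ge_of_tendsto hbound (eventually_atTop.2 ⟨1, fun N hN => ?_⟩)) bot_le
  exact PhiM_unif_not_convergent_le hP hxs hab hb1 (Nat.cast_pos.2 hN)
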